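/- Fix an integer s ≥ 2 and a real number r ∈ (0, binom(s,2)], and for n ≥ s let P_n(s,r) ⊆ [0,1]^{E(K_n)} be the set of edge-weightings w : E(K_n) → [0,1] such that w(S) ≤ r for every s-element subset S of [n]. Then for all n ≥ s, ex(E(K_n), P_n(s,r)) = binom(n,2)·log(binom(s,2)/r), and equality (i.e. the maximum box volume (r/binom(s,2))^{binom(n,2)}) is attained, uniquely up to zero-measure sets, by the box [0, r/binom(s,2)]^{E(K_n)}. -/

import Mathlib

open MeasureTheory Filter Set

noncomputable section

/-- The edge set of the complete graph `K_n`, encoded as ordered pairs `(i,j)` with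
`i < j`. -/
def EdgeType (n : ℕ) : Type := {p : Fin n × Fin n // p.1 < p.2}

instance (n : ℕ) : Fintype (EdgeType n) := Subtype.fintype _
instance (n : ℕ) : DecidableEq (EdgeType n) := Subtype.instDecidableEq

/-- The edges of `K_n` lying inside a vertex subset `S`. -/
def edgesIn {n : ℕ} (S : Finset (Fin n)) : Finset (EdgeType n) :=
  Finset.univ.filter (fun e => e.val.1 ∈ S ∧ e.val.2 ∈ S)

/-- The hereditary property `P_n(s,r)`: edge-weightings `w : E(K_n) → [0,1]` in which
every `s`-set of vertices has weight at most `r`. -/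
def weightedProp (n s : ℕ) (r : ℝ) : Set (EdgeType n → ℝ) :=
  {w | (∀ e, w e ∈ Set.Icc (0:ℝ) 1) ∧
    ∀ S : Finset (Fin n), S.card = s → ∑ e ∈ edgesIn S, w e ≤ r}

/-- A box in `[0,1]^ι`: a product of measurable subsets of `[0,1]`. -/
def IsBox {ι : Type} (b : Set (ι → ℝ)) : Prop :=
  ∃ A : ι → Set ℝ, (∀ i, MeasurableSet (A i) ∧ A i ⊆ Set.Icc 0 1) ∧ b = Set.univ.pi A

/-!
Let `M e` be the essential supremum of the side `A e` of a box `b` that lies in `P_n(s,r)` up to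
a null set. Shrinking every side of `b` to its part above `M e - δ` leaves a box of positive
volume, which therefore meets `P_n(s,r)`; hence `∑_{e ⊆ S} M e ≤ r` for every `s`-set `S`.
Double counting the `s`-sets through each edge gives `∑_e M e ≤ C(n,2) r / C(s,2)`, and AM-GM
turns this into `vol b ≤ ∏_e M e ≤ (r / C(s,2))^C(n,2)`. Equality in both steps forces every side
to be `[0, r / C(s,2)]` up to a null set.
-/

section AMGM

variable {ι : Type*} [Fintype ι] {c : ℝ} {M : ι → ℝ}

-- AM-GM through the tangent line `x + 1 ≤ exp x`: the factors `c * exp (M i / c - 1)` dominate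
-- the `M i`, and their product is controlled by `∑ i, M i` alone.
lemma le_mul_exp_div_sub_one (hc : 0 < c) (t : ℝ) : t ≤ c * Real.exp (t / c - 1) := by
  have := Real.add_one_le_exp (t / c - 1)
  calc t = c * (t / c - 1 + 1) := by field_simp; ring
    _ ≤ c * Real.exp (t / c - 1) := by gcongr

lemma lt_mul_exp_div_sub_one (hc : 0 < c) {t : ℝ} (ht : t ≠ c) :
    t < c * Real.exp (t / c - 1) := by
  have := Real.add_one_lt_exp (x := t / c - 1)
    (by rwa [sub_ne_zero, ne_eq, div_eq_one_iff_eq hc.ne'])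
  calc t = c * (t / c - 1 + 1) := by field_simp; ring
    _ < c * Real.exp (t / c - 1) := by gcongr

lemma prod_mul_exp_le_pow (hc : 0 < c) (hM : ∑ i, M i ≤ Fintype.card ι * c) :
    ∏ i, c * Real.exp (M i / c - 1) ≤ c ^ Fintype.card ι := by
  rw [Finset.prod_mul_distrib, Finset.prod_const, Finset.card_univ, ← Real.exp_sum]
  refine mul_le_of_le_one_right (by positivity) (Real.exp_le_one_iff.2 ?_)
  rw [Finset.sum_sub_distrib, ← Finset.sum_div, Finset.sum_const, Finset.card_univ,
    nsmul_eq_mul, mul_one, sub_nonpos, div_le_iff₀ hc]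
  exact hM

lemma prod_le_pow_of_sum_le (hc : 0 < c) (hM0 : ∀ i, 0 ≤ M i)
    (hM : ∑ i, M i ≤ Fintype.card ι * c) : ∏ i, M i ≤ c ^ Fintype.card ι :=
  (Finset.prod_le_prod (fun i _ => hM0 i) fun _ _ => le_mul_exp_div_sub_one hc _).trans
    (prod_mul_exp_le_pow hc hM)

lemma eq_of_prod_eq_pow_of_sum_le (hc : 0 < c) (hM0 : ∀ i, 0 ≤ M i)
    (hM : ∑ i, M i ≤ Fintype.card ι * c) (hprod : ∏ i, M i = c ^ Fintype.card ι) (i : ι) :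
    M i = c := by
  by_contra hne
  have hpos : ∀ j, 0 < M j := fun j => (hM0 j).lt_of_ne' fun h =>
    (pow_pos hc _).ne' (hprod ▸ Finset.prod_eq_zero (Finset.mem_univ j) h)
  have hlt := Finset.prod_lt_prod (fun j _ => hpos j) (fun j _ => le_mul_exp_div_sub_one hc _)
    ⟨i, Finset.mem_univ i, lt_mul_exp_div_sub_one hc hne⟩
  exact (hlt.trans_le (prod_mul_exp_le_pow hc hM)).ne hprod

end AMGM

def setEssSup (A : Set ℝ) : ℝ := sInf {x | 0 ≤ x ∧ volume (A ∩ Ioi x) = 0}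

section setEssSup

variable {A : Set ℝ}

lemma setEssSup_set_nonempty (hA : A ⊆ Icc 0 1) :
    {x | 0 ≤ x ∧ volume (A ∩ Ioi x) = 0}.Nonempty :=
  ⟨1, zero_le_one,
    measure_mono_null (fun _ hx => absurd (hA hx.1).2 (not_le.2 hx.2)) measure_empty⟩

lemma setEssSup_set_bddBelow : BddBelow {x | 0 ≤ x ∧ volume (A ∩ Ioi x) = 0} :=
  ⟨0, fun _ hx => hx.1⟩

lemma setEssSup_nonneg (hA : A ⊆ Icc 0 1) : 0 ≤ setEssSup A :=
  le_csInf (setEssSup_set_nonempty hA) fun _ hx => hx.1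

lemma volume_inter_Ioi_setEssSup (hA : A ⊆ Icc 0 1) : volume (A ∩ Ioi (setEssSup A)) = 0 := by
  obtain ⟨u, -, hu, huA⟩ := exists_seq_tendsto_sInf (setEssSup_set_nonempty hA)
    setEssSup_set_bddBelow
  refine measure_mono_null (fun x hx => ?_) (measure_iUnion_null fun k => (huA k).2)
  obtain ⟨hxA, hx⟩ := hx
  obtain ⟨k, hk⟩ := (hu.eventually (gt_mem_nhds hx)).exists
  exact mem_iUnion.2 ⟨k, hxA, hk⟩

lemma ae_subset_Icc_setEssSup (hA : A ⊆ Icc 0 1) : A ≤ᵐ[volume] Icc 0 (setEssSup A) := by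
  refine ae_le_set.2 (measure_mono_null ?_ (volume_inter_Ioi_setEssSup hA))
  rintro x ⟨hxA, hx⟩
  exact ⟨hxA, lt_of_not_ge fun h => hx ⟨(hA hxA).1, h⟩⟩

lemma toReal_volume_le_setEssSup (hA : A ⊆ Icc 0 1) : (volume A).toReal ≤ setEssSup A := by
  have h := measure_mono_ae (ae_subset_Icc_setEssSup hA)
  rw [Real.volume_Icc, sub_zero] at h
  exact ENNReal.toReal_le_of_le_ofReal (setEssSup_nonneg hA) h

lemma volume_inter_Ioi_ne_zero_of_lt_setEssSup (hA : A ⊆ Icc 0 1) (h0 : volume A ≠ 0) {x : ℝ}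
    (hx : x < setEssSup A) : volume (A ∩ Ioi x) ≠ 0 := by
  intro hnull
  rcases le_or_gt 0 x with hx0 | hx0
  · exact (csInf_le setEssSup_set_bddBelow ⟨hx0, hnull⟩).not_gt hx
  · have hAx : A ∩ Ioi x = A := inter_eq_left.2 fun y hy => mem_Ioi.2 (hx0.trans_le (hA hy).1)
    exact h0 (hAx ▸ hnull)

end setEssSup

section Box

variable {ι : Type*} [Fintype ι] {A : ι → Set ℝ} {P : Set (ι → ℝ)}

lemma volume_pi_eq_ofReal_prod (hA : ∀ i, A i ⊆ Icc 0 1) :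
    volume (pi univ A) = ENNReal.ofReal (∏ i, (volume (A i)).toReal) := by
  rw [volume_pi_pi, ENNReal.ofReal_prod_of_nonneg fun _ _ => ENNReal.toReal_nonneg]
  refine Finset.prod_congr rfl fun i _ => (ENNReal.ofReal_toReal ?_).symm
  exact measure_ne_top_of_subset (hA i) measure_Icc_lt_top.ne

lemma exists_mem_forall_lt_of_lt_setEssSup (hA : ∀ i, A i ⊆ Icc 0 1)
    (h0 : ∀ i, volume (A i) ≠ 0) (hP : volume (pi univ A \ P) = 0) {x : ι → ℝ}
    (hx : ∀ i, x i < setEssSup (A i)) : ∃ w ∈ P, ∀ i, x i < w i := by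
  have hpos : volume (pi univ fun i => A i ∩ Ioi (x i)) ≠ 0 := by
    rw [volume_pi_pi]
    exact Finset.prod_ne_zero_iff.2 fun i _ =>
      volume_inter_Ioi_ne_zero_of_lt_setEssSup (hA i) (h0 i) (hx i)
  by_contra! hnone
  refine hpos (measure_mono_null (fun w hw => ?_) hP)
  refine ⟨fun i _ => (hw i trivial).1, fun hwP => ?_⟩
  obtain ⟨i, hi⟩ := hnone w hwP
  exact (hw i trivial).2.not_ge hi

lemma sum_setEssSup_le (hA : ∀ i, A i ⊆ Icc 0 1) (h0 : ∀ i, volume (A i) ≠ 0)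
    (hP : volume (pi univ A \ P) = 0) {T : Finset ι} {r : ℝ}
    (hT : ∀ w ∈ P, ∑ i ∈ T, w i ≤ r) : ∑ i ∈ T, setEssSup (A i) ≤ r := by
  refine le_of_forall_pos_le_add fun ε hε => ?_
  set δ := ε / (T.card + 1)
  have hδ : 0 < δ := by positivity
  have hTδ : T.card * δ ≤ ε := by
    rw [mul_div_assoc', div_le_iff₀ (by positivity)]
    nlinarith
  obtain ⟨w, hwP, hw⟩ := exists_mem_forall_lt_of_lt_setEssSup hA h0 hP
    (x := fun i => setEssSup (A i) - δ) fun i => sub_lt_self _ hδ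
  calc ∑ i ∈ T, setEssSup (A i) = ∑ i ∈ T, (setEssSup (A i) - δ) + T.card * δ := by
        simp [Finset.sum_sub_distrib]
    _ ≤ ∑ i ∈ T, w i + ε := add_le_add (Finset.sum_le_sum fun i _ => (hw i).le) hTδ
    _ ≤ r + ε := by linarith [hT w hwP]

end Box

section CompleteGraph

variable {n s : ℕ}

lemma mem_edgesIn_iff_pair_subset {S : Finset (Fin n)} {e : EdgeType n} :
    e ∈ edgesIn S ↔ {e.val.1, e.val.2} ⊆ S := by
  simp [edgesIn, Finset.insert_subset_iff]

lemma card_edgesIn (S : Finset (Fin n)) : (edgesIn S).card = S.card.choose 2 := by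
  rw [← Sym2.card_image_offDiag S]
  refine Finset.card_nbij (fun e => s(e.val.1, e.val.2)) ?_ ?_ ?_
  · intro e he
    rw [Finset.mem_coe, mem_edgesIn_iff_pair_subset, Finset.insert_subset_iff,
      Finset.singleton_subset_iff] at he
    exact Finset.mem_image.2 ⟨e.val, Finset.mem_offDiag.2 ⟨he.1, he.2, e.prop.ne⟩, rfl⟩
  · rintro ⟨⟨a, b⟩, hab⟩ - ⟨⟨c, d⟩, hcd⟩ - h
    rcases Sym2.eq_iff.1 h with ⟨rfl, rfl⟩ | ⟨rfl, rfl⟩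
    · rfl
    · exact absurd (hab.trans hcd) (lt_irrefl a)
  · intro z hz
    obtain ⟨⟨a, b⟩, hab, rfl⟩ := Finset.mem_image.1 hz
    obtain ⟨ha, hb, hne⟩ := Finset.mem_offDiag.1 hab
    rcases hne.lt_or_gt with h | h
    · exact ⟨⟨(a, b), h⟩, mem_edgesIn_iff_pair_subset.2 (Finset.insert_subset ha
        (Finset.singleton_subset_iff.2 hb)), rfl⟩
    · exact ⟨⟨(b, a), h⟩, mem_edgesIn_iff_pair_subset.2 (Finset.insert_subset hb
        (Finset.singleton_subset_iff.2 ha)), Sym2.eq_swap⟩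

lemma card_edgeType : Fintype.card (EdgeType n) = n.choose 2 := by
  have h : edgesIn (Finset.univ : Finset (Fin n)) = Finset.univ := by
    ext e; simp [edgesIn]
  rw [← Finset.card_univ, ← h, card_edgesIn, Finset.card_univ, Fintype.card_fin]

lemma card_filter_mem_edgesIn (hs : 2 ≤ s) (e : EdgeType n) :
    ((Finset.univ.powersetCard s).filter (e ∈ edgesIn ·)).card = (n - 2).choose (s - 2) := by
  have hpair : ({e.val.1, e.val.2} : Finset (Fin n)).card = 2 := Finset.card_pair e.prop.ne
  simp_rw [mem_edgesIn_iff_pair_subset]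
  rw [Finset.card_filter_powersetCard_subset _ _ _ (Finset.subset_univ _) (hpair ▸ hs), hpair,
    Finset.card_univ, Fintype.card_fin]

lemma sum_le_of_forall_sum_edgesIn_le (hs : 2 ≤ s) (hn : s ≤ n) {r : ℝ}
    {M : EdgeType n → ℝ} (h : ∀ S : Finset (Fin n), S.card = s → ∑ e ∈ edgesIn S, M e ≤ r) :
    ∑ e, M e ≤ n.choose 2 * (r / s.choose 2) := by
  have hcount : ∑ S ∈ Finset.univ.powersetCard s, ∑ e ∈ edgesIn S, M e
      = (n - 2).choose (s - 2) * ∑ e, M e := by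
    rw [Finset.sum_comm' (t' := Finset.univ)
      (s' := fun e => (Finset.univ.powersetCard s).filter (e ∈ edgesIn ·)) (by simp)]
    simp [card_filter_mem_edgesIn hs, Finset.mul_sum]
  have hbound :
      ∑ S ∈ Finset.univ.powersetCard s, ∑ e ∈ edgesIn S, M e ≤ n.choose s * r := by
    simpa using Finset.sum_le_card_nsmul (Finset.univ.powersetCard s) _ r
      fun S hS => h S (Finset.mem_powersetCard.1 hS).2
  have hid : (n.choose s * s.choose 2 : ℝ) = n.choose 2 * (n - 2).choose (s - 2) := by
    exact_mod_cast Nat.choose_mul hs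
  have hK : (0 : ℝ) < (n - 2).choose (s - 2) := by exact_mod_cast Nat.choose_pos (by omega)
  have hs2 : (0 : ℝ) < s.choose 2 := by exact_mod_cast Nat.choose_pos hs
  rw [mul_div_assoc', le_div_iff₀ hs2]
  refine le_of_mul_le_mul_left ?_ hK
  calc (n - 2).choose (s - 2) * ((∑ e, M e) * s.choose 2)
      = (∑ S ∈ Finset.univ.powersetCard s, ∑ e ∈ edgesIn S, M e) * s.choose 2 := by
        rw [hcount]; ring
    _ ≤ n.choose s * r * s.choose 2 := by gcongr
    _ = (n - 2).choose (s - 2) * (n.choose 2 * r) := by linear_combination r * hid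

end CompleteGraph

section WeightedProp

variable {n s : ℕ} {r : ℝ} {A : EdgeType n → Set ℝ}

lemma pi_Icc_subset_weightedProp (hs : 2 ≤ s) (hr : r ≤ s.choose 2) :
    pi univ (fun _ => Icc 0 (r / s.choose 2)) ⊆ weightedProp n s r := by
  have hs2 : (0 : ℝ) < s.choose 2 := by exact_mod_cast Nat.choose_pos hs
  intro w hw
  refine ⟨fun e => ⟨(hw e trivial).1, (hw e trivial).2.trans ((div_le_one hs2).2 hr)⟩,
    fun S hS => ?_⟩
  calc ∑ e ∈ edgesIn S, w e ≤ (edgesIn S).card • (r / s.choose 2) :=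
        Finset.sum_le_card_nsmul _ _ _ fun e _ => (hw e trivial).2
    _ = r := by rw [card_edgesIn, hS, nsmul_eq_mul]; field_simp

lemma sum_setEssSup_le_of_weightedProp (hs : 2 ≤ s) (hn : s ≤ n) (hA : ∀ e, A e ⊆ Icc 0 1)
    (h0 : ∀ e, volume (A e) ≠ 0) (hP : volume (pi univ A \ weightedProp n s r) = 0) :
    ∑ e, setEssSup (A e) ≤ Fintype.card (EdgeType n) * (r / s.choose 2) := by
  rw [card_edgeType]
  exact sum_le_of_forall_sum_edgesIn_le hs hn fun S hS => sum_setEssSup_le hA h0 hP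
    fun w hw => hw.2 S hS

lemma volume_pi_le_of_weightedProp (hs : 2 ≤ s) (hn : s ≤ n) (hr : 0 < r)
    (hA : ∀ e, A e ⊆ Icc 0 1) (hP : volume (pi univ A \ weightedProp n s r) = 0) :
    volume (pi univ A) ≤ ENNReal.ofReal ((r / s.choose 2) ^ n.choose 2) := by
  by_cases! h0 : ∃ e, volume (A e) = 0
  · obtain ⟨e, he⟩ := h0
    rw [volume_pi_pi, Finset.prod_eq_zero (Finset.mem_univ e) he]
    exact zero_le
  · have hc : 0 < r / s.choose 2 := div_pos hr (by exact_mod_cast Nat.choose_pos hs)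
    rw [volume_pi_eq_ofReal_prod hA, ← card_edgeType (n := n)]
    refine ENNReal.ofReal_le_ofReal ((Finset.prod_le_prod (fun _ _ => ENNReal.toReal_nonneg)
      fun e _ => toReal_volume_le_setEssSup (hA e)).trans ?_)
    exact prod_le_pow_of_sum_le hc (fun e => setEssSup_nonneg (hA e))
      (sum_setEssSup_le_of_weightedProp hs hn hA h0 hP)

lemma pi_ae_eq_pi_Icc_of_weightedProp (hs : 2 ≤ s) (hn : s ≤ n) (hr : 0 < r)
    (hA : ∀ e, MeasurableSet (A e) ∧ A e ⊆ Icc 0 1)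
    (hP : volume (pi univ A \ weightedProp n s r) = 0)
    (hvol : volume (pi univ A) = ENNReal.ofReal ((r / s.choose 2) ^ n.choose 2)) :
    pi univ A =ᵐ[volume] pi univ fun _ => Icc 0 (r / s.choose 2) := by
  set c := r / s.choose 2
  have hc : 0 < c := div_pos hr (by exact_mod_cast Nat.choose_pos hs)
  have hA' : ∀ e, A e ⊆ Icc 0 1 := fun e => (hA e).2
  have h0 : ∀ e, volume (A e) ≠ 0 := fun e he => by
    rw [volume_pi_pi, Finset.prod_eq_zero (Finset.mem_univ e) he, eq_comm,
      ENNReal.ofReal_eq_zero] at hvol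
    exact (pow_pos hc _).not_ge hvol
  have hsumM := sum_setEssSup_le_of_weightedProp hs hn hA' h0 hP
  have hprod : ∏ e, (volume (A e)).toReal = c ^ Fintype.card (EdgeType n) := by
    rw [volume_pi_eq_ofReal_prod hA', ← card_edgeType (n := n)] at hvol
    exact (ENNReal.ofReal_eq_ofReal_iff (Finset.prod_nonneg fun _ _ => ENNReal.toReal_nonneg)
      (pow_nonneg hc.le _)).1 hvol
  have hvM : ∀ e, (volume (A e)).toReal ≤ setEssSup (A e) :=
    fun e => toReal_volume_le_setEssSup (hA' e)
  have hM : ∀ e, setEssSup (A e) = c := by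
    refine eq_of_prod_eq_pow_of_sum_le hc (fun e => setEssSup_nonneg (hA' e)) hsumM
      (le_antisymm (prod_le_pow_of_sum_le hc (fun e => setEssSup_nonneg (hA' e)) hsumM) ?_)
    exact hprod ▸ Finset.prod_le_prod (fun _ _ => ENNReal.toReal_nonneg) fun e _ => hvM e
  have hv : ∀ e, (volume (A e)).toReal = c := eq_of_prod_eq_pow_of_sum_le hc
    (fun _ => ENNReal.toReal_nonneg) ((Finset.sum_le_sum fun e _ => hvM e).trans hsumM) hprod
  refine Measure.ae_eq_set_pi fun e _ => ae_eq_of_ae_subset_of_measure_ge ?_ ?_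
    (hA e).1.nullMeasurableSet measure_Icc_lt_top.ne
  · simpa [hM e] using ae_subset_Icc_setEssSup (hA' e)
  · rw [Real.volume_Icc, sub_zero, ← hv e,
      ENNReal.ofReal_toReal (measure_ne_top_of_subset (hA' e) measure_Icc_lt_top.ne)]

end WeightedProp

/-- **Theorem (extremal entropy for weighted graphs).**
For `s ≥ 2`, `r ∈ (0, C(s,2)]` and `n ≥ s`:
`ex(E(K_n), P_n(s,r)) = C(n,2) log (C(s,2)/r)`, i.e. every box `b` with
`vol(b \ P_n(s,r)) = 0` has `vol(b) ≤ (r/C(s,2))^{C(n,2)}`; the bound is attained by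
the box `[0, r/C(s,2)]^{E(K_n)}`, and uniquely so up to zero-measure sets. -/
theorem extremal_entropy_weighted_graphs
    (s : ℕ) (hs : 2 ≤ s) (r : ℝ) (hr : r ∈ Set.Ioc (0:ℝ) (s.choose 2 : ℝ))
    (n : ℕ) (hn : s ≤ n) :
    (∀ b : Set (EdgeType n → ℝ), IsBox b → volume (b \ weightedProp n s r) = 0 →
      volume b ≤ ENNReal.ofReal ((r / (s.choose 2 : ℝ)) ^ (n.choose 2))) ∧
    (Set.univ.pi (fun _ : EdgeType n => Set.Icc (0:ℝ) (r / (s.choose 2 : ℝ))) ⊆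
      weightedProp n s r) ∧
    volume (Set.univ.pi (fun _ : EdgeType n => Set.Icc (0:ℝ) (r / (s.choose 2 : ℝ)))) =
      ENNReal.ofReal ((r / (s.choose 2 : ℝ)) ^ (n.choose 2)) ∧
    (∀ b : Set (EdgeType n → ℝ), IsBox b → volume (b \ weightedProp n s r) = 0 →
      volume b = ENNReal.ofReal ((r / (s.choose 2 : ℝ)) ^ (n.choose 2)) →
      volume ((b \ Set.univ.pi (fun _ : EdgeType n => Set.Icc (0:ℝ) (r / (s.choose 2 : ℝ)))) ∪
        (Set.univ.pi (fun _ : EdgeType n => Set.Icc (0:ℝ) (r / (s.choose 2 : ℝ))) \ b)) = 0) := by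
  obtain ⟨hr0, hrs⟩ := hr
  have hc : 0 ≤ r / s.choose 2 := div_nonneg hr0.le (Nat.cast_nonneg _)
  refine ⟨?_, pi_Icc_subset_weightedProp hs hrs, ?_, ?_⟩
  · rintro b ⟨A, hA, rfl⟩ hP
    exact volume_pi_le_of_weightedProp hs hn hr0 (fun e => (hA e).2) hP
  · rw [volume_pi_pi, Finset.prod_const, Real.volume_Icc, sub_zero, Finset.card_univ,
      card_edgeType, ENNReal.ofReal_pow hc]
  · rintro b ⟨A, hA, rfl⟩ hP hvol
    obtain ⟨hdiff, hdiff'⟩ := ae_eq_set.1 (pi_ae_eq_pi_Icc_of_weightedProp hs hn hr0 hA hP hvol)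
    exact measure_union_null hdiff hdiff'

end
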